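/- arXiv:1810.10427 — 2 statements merged into one kernel-verified Lean document; each statement's English description precedes it below -/
import Mathlib

section
/- Variance bound for bilinear forms: let (x_i, y_i), i = 1,…,n, be i.i.d. mean-zero pairs with E x₁² = γˣ, E y₁² = γʸ, E x₁y₁ = ρ, κ = E(x₁y₁ − ρ)², and B a symmetric n×n real matrix. Then E[(XᵀBY − ρ tr B)²] ≤ 3 max(κ, γˣγʸ) tr(B²), where X = (x_i), Y = (y_i). -/
/-!
Write `Z i j = x i * y j - ρ δᵢⱼ`, so that `XᵀBY - ρ tr B = ∑ Bᵢⱼ Zᵢⱼ`. If one of the indices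
`i, j, k, l` occurs only once, the corresponding coordinate is independent of everything else
in `Zᵢⱼ Zₖₗ` and has mean zero, so `E[Zᵢⱼ Zₖₗ] = 0`; the surviving pairings give `γˣγʸ`
(`(k, l) = (i, j)`), `ρ²` (`(k, l) = (j, i)`) and `κ` (all indices equal). Hence the left-hand
side equals `(γˣγʸ + ρ²)(tr B² - ∑ Bᵢᵢ²) + κ ∑ Bᵢᵢ²`, and Cauchy–Schwarz (`ρ² ≤ γˣγʸ`) bounds
it by `2 max(κ, γˣγʸ) tr B²`.
-/

open MeasureTheory ProbabilityTheory Matrix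

open scoped ENNReal

instance ENNReal.HolderTriple.instFourFourTwo : ENNReal.HolderTriple 4 4 2 where
  inv_add_inv_eq_inv := by
    rw [← two_mul, show (4 : ℝ≥0∞) = 2 * 2 by norm_num, ENNReal.mul_inv (by norm_num) (by norm_num),
      ← mul_assoc, ENNReal.mul_inv_cancel (by norm_num) (by norm_num), one_mul]

section Independence

variable {Ω ι β : Type*} {mΩ : MeasurableSpace Ω} {μ : Measure Ω} {mβ : MeasurableSpace β}
  {ξ : ι → Ω → β}

lemma measurable_iSup_compl_singleton_comp {a b : ι} (hb : b ≠ a) {f : β → ℝ}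
    (hf : Measurable f) :
    Measurable[⨆ c ∈ ({a}ᶜ : Set ι), mβ.comap (ξ c)] fun ω => f (ξ b ω) :=
  (hf.comp (comap_measurable (ξ b))).mono
    (le_iSup₂ (f := fun c (_ : c ∈ ({a}ᶜ : Set ι)) => mβ.comap (ξ c)) b hb) le_rfl

lemma ProbabilityTheory.iIndepFun.integral_comp_mul_eq_mul_integral (hξ : iIndepFun ξ μ)
    (hξm : ∀ i, Measurable (ξ i)) (a : ι) {f : β → ℝ} (hf : Measurable f) {G : Ω → ℝ}
    (hG : Measurable[⨆ c ∈ ({a}ᶜ : Set ι), mβ.comap (ξ c)] G) :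
    ∫ ω, f (ξ a ω) * G ω ∂μ = (∫ ω, f (ξ a ω) ∂μ) * ∫ ω, G ω ∂μ := by
  have hle : ∀ c, mβ.comap (ξ c) ≤ mΩ := fun c => (hξm c).comap_le
  have hindep := indep_iSup_of_disjoint hle ((iIndepFun_iff_iIndep _ _ _).1 hξ)
    (disjoint_compl_right (a := ({a} : Set ι)))
  have hFG : IndepFun (fun ω => f (ξ a ω)) G μ := by
    rw [IndepFun_iff_Indep]
    refine indep_of_indep_of_le_right (indep_of_indep_of_le_left hindep ?_) hG.comap_le
    exact ((hf.comp (comap_measurable (ξ a))).comap_le).trans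
      (le_iSup₂ (f := fun c (_ : c ∈ ({a} : Set ι)) => mβ.comap (ξ c)) a rfl)
  have hGm : Measurable G := hG.mono (iSup₂_le fun c _ => hle c) le_rfl
  exact hFG.integral_fun_mul_eq_mul_integral (hf.comp (hξm a)).aestronglyMeasurable
    hGm.aestronglyMeasurable

end Independence

section Integrals

variable {Ω : Type*} [MeasurableSpace Ω] {μ : Measure Ω}

lemma sq_integral_mul_le_integral_sq_mul_integral_sq {f g : Ω → ℝ} (hf : MemLp f 2 μ)
    (hg : MemLp g 2 μ) :
    (∫ ω, f ω * g ω ∂μ) ^ 2 ≤ (∫ ω, f ω ^ 2 ∂μ) * ∫ ω, g ω ^ 2 ∂μ := by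
  have inner_toLp : ∀ {u v : Ω → ℝ} (hu : MemLp u 2 μ) (hv : MemLp v 2 μ),
      inner ℝ (hu.toLp u) (hv.toLp v) = ∫ ω, u ω * v ω ∂μ := by
    intro u v hu hv
    rw [L2.inner_def]
    refine integral_congr_ae ?_
    filter_upwards [hu.coeFn_toLp, hv.coeFn_toLp] with ω hu' hv'
    simp [hu', hv', mul_comm]
  simpa only [inner_toLp, sq] using real_inner_mul_inner_self_le (hf.toLp f) (hg.toLp g)

lemma integral_finsetSum_sq {ι : Type*} (s : Finset ι) {Z : ι → Ω → ℝ}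
    (hZ : ∀ p ∈ s, ∀ q ∈ s, Integrable (fun ω => Z p ω * Z q ω) μ) :
    ∫ ω, (∑ p ∈ s, Z p ω) ^ 2 ∂μ = ∑ p ∈ s, ∑ q ∈ s, ∫ ω, Z p ω * Z q ω ∂μ := by
  simp_rw [sq, Finset.sum_mul_sum]
  rw [integral_finsetSum _ fun p hp => integrable_finsetSum _ fun q hq => hZ p hp q hq]
  exact Finset.sum_congr rfl fun p hp => integral_finsetSum _ fun q hq => hZ p hp q hq

end Integrals

lemma four_indices_pairing {α : Type*} {i j k l : α} (hi : ¬(i ≠ j ∧ i ≠ k ∧ i ≠ l))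
    (hj : ¬(j ≠ i ∧ j ≠ k ∧ j ≠ l)) (hk : ¬(k ≠ l ∧ k ≠ i ∧ k ≠ j))
    (hl : ¬(l ≠ k ∧ l ≠ i ∧ l ≠ j)) :
    (i = j ∧ k = l) ∨ (i = k ∧ j = l) ∨ (i = l ∧ j = k) := by
  grind

section CenteredProducts

variable {Ω ι : Type*} [DecidableEq ι]

def centeredMul (x y : ι → Ω → ℝ) (ρ : ℝ) (i j : ι) (ω : Ω) : ℝ :=
  x i ω * y j ω - if i = j then ρ else 0

variable {x y : ι → Ω → ℝ} {ρ : ℝ}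

lemma centeredMul_self (i : ι) : centeredMul x y ρ i i = fun ω => x i ω * y i ω - ρ := by
  ext ω
  simp [centeredMul]

lemma centeredMul_of_ne {i j : ι} (h : i ≠ j) : centeredMul x y ρ i j = fun ω => x i ω * y j ω := by
  ext ω
  simp [centeredMul, h]

lemma measurable_centeredMul_of_ne {a k l : ι} (hk : k ≠ a) (hl : l ≠ a) :
    Measurable[⨆ c ∈ ({a}ᶜ : Set ι), MeasurableSpace.comap (fun ω => (x c ω, y c ω)) inferInstance]
      (centeredMul x y ρ k l) :=
  ((measurable_iSup_compl_singleton_comp hk measurable_fst).mul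
    (measurable_iSup_compl_singleton_comp hl measurable_snd)).sub_const _

variable [MeasurableSpace Ω] {μ : Measure Ω}

lemma integral_centeredMul_mul_eq_zero (hξ : iIndepFun (fun i ω => (x i ω, y i ω)) μ)
    (hx : ∀ i, Measurable (x i)) (hy : ∀ i, Measurable (y i))
    (hmx : ∀ i, ∫ ω, x i ω ∂μ = 0) (hmy : ∀ i, ∫ ω, y i ω ∂μ = 0) {i j k l : ι}
    (h : (i ≠ j ∧ i ≠ k ∧ i ≠ l) ∨ (j ≠ i ∧ j ≠ k ∧ j ≠ l)) :
    ∫ ω, centeredMul x y ρ i j ω * centeredMul x y ρ k l ω ∂μ = 0 := by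
  have hξm : ∀ i, Measurable fun ω => (x i ω, y i ω) := fun i => (hx i).prodMk (hy i)
  rcases h with ⟨hij, hik, hil⟩ | ⟨hji, hjk, hjl⟩
  · calc ∫ ω, centeredMul x y ρ i j ω * centeredMul x y ρ k l ω ∂μ
        = ∫ ω, x i ω * (y j ω * centeredMul x y ρ k l ω) ∂μ := by
          simp only [centeredMul_of_ne hij, mul_assoc]
      _ = (∫ ω, x i ω ∂μ) * ∫ ω, y j ω * centeredMul x y ρ k l ω ∂μ :=
          hξ.integral_comp_mul_eq_mul_integral hξm i measurable_fst
            ((measurable_iSup_compl_singleton_comp (Ne.symm hij) measurable_snd).mul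
              (measurable_centeredMul_of_ne hik.symm hil.symm))
      _ = 0 := by rw [hmx, zero_mul]
  · calc ∫ ω, centeredMul x y ρ i j ω * centeredMul x y ρ k l ω ∂μ
        = ∫ ω, y j ω * (x i ω * centeredMul x y ρ k l ω) ∂μ := by
          simp only [centeredMul_of_ne (Ne.symm hji), mul_left_comm, mul_assoc]
      _ = (∫ ω, y j ω ∂μ) * ∫ ω, x i ω * centeredMul x y ρ k l ω ∂μ :=
          hξ.integral_comp_mul_eq_mul_integral hξm j measurable_snd
            ((measurable_iSup_compl_singleton_comp (Ne.symm hji) measurable_fst).mul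
              (measurable_centeredMul_of_ne hjk.symm hjl.symm))
      _ = 0 := by rw [hmy, zero_mul]

lemma integral_centeredMul_self_mul_self_of_ne [IsProbabilityMeasure μ]
    (hξ : iIndepFun (fun i ω => (x i ω, y i ω)) μ)
    (hx : ∀ i, Measurable (x i)) (hy : ∀ i, Measurable (y i)) {i k : ι}
    (hxy : Integrable (fun ω => x i ω * y i ω) μ) (hρ : ∫ ω, x i ω * y i ω ∂μ = ρ) (hik : i ≠ k) :
    ∫ ω, centeredMul x y ρ i i ω * centeredMul x y ρ k k ω ∂μ = 0 := by
  have hprod : Measurable fun z : ℝ × ℝ => z.1 * z.2 - ρ := by fun_prop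
  calc ∫ ω, centeredMul x y ρ i i ω * centeredMul x y ρ k k ω ∂μ
      = ∫ ω, (x i ω * y i ω - ρ) * (x k ω * y k ω - ρ) ∂μ := by simp only [centeredMul_self]
    _ = (∫ ω, x i ω * y i ω - ρ ∂μ) * ∫ ω, x k ω * y k ω - ρ ∂μ :=
        hξ.integral_comp_mul_eq_mul_integral (fun i => (hx i).prodMk (hy i)) i hprod
          (measurable_iSup_compl_singleton_comp (Ne.symm hik) hprod)
    _ = 0 := by simp [integral_sub hxy (integrable_const ρ), hρ]

lemma integral_centeredMul_mul_self_of_ne (hξ : iIndepFun (fun i ω => (x i ω, y i ω)) μ)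
    (hx : ∀ i, Measurable (x i)) (hy : ∀ i, Measurable (y i)) {i j : ι} (hij : i ≠ j) :
    ∫ ω, centeredMul x y ρ i j ω * centeredMul x y ρ i j ω ∂μ =
      (∫ ω, x i ω ^ 2 ∂μ) * ∫ ω, y j ω ^ 2 ∂μ := by
  calc ∫ ω, centeredMul x y ρ i j ω * centeredMul x y ρ i j ω ∂μ
      = ∫ ω, x i ω ^ 2 * y j ω ^ 2 ∂μ := by
        simp only [centeredMul_of_ne hij]
        congr 1 with ω
        ring
    _ = (∫ ω, x i ω ^ 2 ∂μ) * ∫ ω, y j ω ^ 2 ∂μ :=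
        hξ.integral_comp_mul_eq_mul_integral (fun i => (hx i).prodMk (hy i)) i
          (measurable_fst.pow_const 2)
          (measurable_iSup_compl_singleton_comp (Ne.symm hij) (measurable_snd.pow_const 2))

lemma integral_centeredMul_mul_swap_of_ne (hξ : iIndepFun (fun i ω => (x i ω, y i ω)) μ)
    (hx : ∀ i, Measurable (x i)) (hy : ∀ i, Measurable (y i)) {i j : ι} (hij : i ≠ j) :
    ∫ ω, centeredMul x y ρ i j ω * centeredMul x y ρ j i ω ∂μ =
      (∫ ω, x i ω * y i ω ∂μ) * ∫ ω, x j ω * y j ω ∂μ := by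
  calc ∫ ω, centeredMul x y ρ i j ω * centeredMul x y ρ j i ω ∂μ
      = ∫ ω, x i ω * y i ω * (x j ω * y j ω) ∂μ := by
        simp only [centeredMul_of_ne hij, centeredMul_of_ne (Ne.symm hij)]
        congr 1 with ω
        ring
    _ = (∫ ω, x i ω * y i ω ∂μ) * ∫ ω, x j ω * y j ω ∂μ :=
        hξ.integral_comp_mul_eq_mul_integral (fun i => (hx i).prodMk (hy i)) i
          (measurable_fst.mul measurable_snd)
          (measurable_iSup_compl_singleton_comp (Ne.symm hij) (measurable_fst.mul measurable_snd))

lemma integral_centeredMul_mul_centeredMul [IsProbabilityMeasure μ]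
    (hξ : iIndepFun (fun i ω => (x i ω, y i ω)) μ)
    (hx : ∀ i, Measurable (x i)) (hy : ∀ i, Measurable (y i))
    (hmx : ∀ i, ∫ ω, x i ω ∂μ = 0) (hmy : ∀ i, ∫ ω, y i ω ∂μ = 0)
    (hxy : ∀ i, Integrable (fun ω => x i ω * y i ω) μ) {γx γy κ : ℝ}
    (hγx : ∀ i, ∫ ω, x i ω ^ 2 ∂μ = γx) (hγy : ∀ i, ∫ ω, y i ω ^ 2 ∂μ = γy)
    (hρ : ∀ i, ∫ ω, x i ω * y i ω ∂μ = ρ) (hκ : ∀ i, ∫ ω, (x i ω * y i ω - ρ) ^ 2 ∂μ = κ)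
    (i j k l : ι) :
    ∫ ω, centeredMul x y ρ i j ω * centeredMul x y ρ k l ω ∂μ =
      (if i = k ∧ j = l then γx * γy else 0) + (if i = l ∧ j = k then ρ ^ 2 else 0) +
        (if i = j ∧ j = k ∧ k = l then κ - γx * γy - ρ ^ 2 else 0) := by
  by_cases hij : (i ≠ j ∧ i ≠ k ∧ i ≠ l) ∨ (j ≠ i ∧ j ≠ k ∧ j ≠ l)
  · rw [integral_centeredMul_mul_eq_zero hξ hx hy hmx hmy hij]
    rcases hij with ⟨h₁, h₂, h₃⟩ | ⟨h₁, h₂, h₃⟩ <;> simp [h₁, h₂, h₃, Ne.symm h₁]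
  by_cases hkl : (k ≠ l ∧ k ≠ i ∧ k ≠ j) ∨ (l ≠ k ∧ l ≠ i ∧ l ≠ j)
  · simp_rw [mul_comm (centeredMul x y ρ i j _)]
    rw [integral_centeredMul_mul_eq_zero hξ hx hy hmx hmy hkl]
    rcases hkl with ⟨h₁, h₂, h₃⟩ | ⟨h₁, h₂, h₃⟩ <;> simp [h₁, Ne.symm h₁, Ne.symm h₂, Ne.symm h₃]
  by_cases hall : i = j ∧ j = k ∧ k = l
  · obtain ⟨rfl, rfl, rfl⟩ := hall
    simp only [centeredMul_self, ← sq, hκ, and_self, if_true]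
    ring
  rcases four_indices_pairing (not_or.1 hij).1 (not_or.1 hij).2 (not_or.1 hkl).1
    (not_or.1 hkl).2 with ⟨rfl, rfl⟩ | ⟨rfl, rfl⟩ | ⟨rfl, rfl⟩
  · have hik : i ≠ k := fun h => hall ⟨rfl, h, rfl⟩
    simp [integral_centeredMul_self_mul_self_of_ne hξ hx hy (hxy i) (hρ i) hik, hik]
  · have hij : i ≠ j := fun h => hall ⟨h, h ▸ rfl, h ▸ rfl⟩
    simp [integral_centeredMul_mul_self_of_ne hξ hx hy hij, hγx, hγy, hij]
  · have hij : i ≠ j := fun h => hall ⟨h, rfl, h ▸ rfl⟩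
    simp [integral_centeredMul_mul_swap_of_ne hξ hx hy hij, hρ, hij, sq]

end CenteredProducts

lemma Matrix.trace_transpose_mul_self_eq_sum_sq {ι : Type*} [Fintype ι] (B : Matrix ι ι ℝ) :
    (Bᵀ * B).trace = ∑ i, ∑ j, B i j ^ 2 := by
  rw [Finset.sum_comm]
  simp [Matrix.trace, Matrix.mul_apply, sq]

lemma Matrix.sum_diag_sq_le_trace_transpose_mul_self {ι : Type*} [Fintype ι]
    (B : Matrix ι ι ℝ) : ∑ i, B i i ^ 2 ≤ (Bᵀ * B).trace := by
  rw [trace_transpose_mul_self_eq_sum_sq]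
  exact Finset.sum_le_sum fun i _ =>
    Finset.single_le_sum (f := fun j => B i j ^ 2) (fun _ _ => sq_nonneg _) (Finset.mem_univ i)

section BilinearForm

variable {Ω ι : Type*} [MeasurableSpace Ω] {μ : Measure Ω} [Fintype ι] [DecidableEq ι]
  {x y : ι → Ω → ℝ}

theorem integral_bilinForm_sub_sq_eq [IsProbabilityMeasure μ]
    (hξ : iIndepFun (fun i ω => (x i ω, y i ω)) μ)
    (hx : ∀ i, Measurable (x i)) (hy : ∀ i, Measurable (y i))
    (hmx : ∀ i, ∫ ω, x i ω ∂μ = 0) (hmy : ∀ i, ∫ ω, y i ω ∂μ = 0)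
    (h4x : ∀ i, MemLp (x i) 4 μ) (h4y : ∀ i, MemLp (y i) 4 μ) {γx γy ρ κ : ℝ}
    (hγx : ∀ i, ∫ ω, x i ω ^ 2 ∂μ = γx) (hγy : ∀ i, ∫ ω, y i ω ^ 2 ∂μ = γy)
    (hρ : ∀ i, ∫ ω, x i ω * y i ω ∂μ = ρ) (hκ : ∀ i, ∫ ω, (x i ω * y i ω - ρ) ^ 2 ∂μ = κ)
    (B : Matrix ι ι ℝ) :
    ∫ ω, ((∑ i, ∑ j, x i ω * B i j * y j ω) - ρ * B.trace) ^ 2 ∂μ =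
      γx * γy * (Bᵀ * B).trace + ρ ^ 2 * (B * B).trace +
        (κ - γx * γy - ρ ^ 2) * ∑ i, B i i ^ 2 := by
  have hZ : ∀ i j, MemLp (centeredMul x y ρ i j) 2 μ := fun i j =>
    ((h4y j).mul (h4x i)).sub (memLp_const _)
  have hxy : ∀ i, Integrable (fun ω => x i ω * y i ω) μ := fun i =>
    ((h4y i).mul (r := 2) (h4x i)).integrable one_le_two
  have hsum : ∀ ω, (∑ i, ∑ j, x i ω * B i j * y j ω) - ρ * B.trace =
      ∑ p : ι × ι, B p.1 p.2 * centeredMul x y ρ p.1 p.2 ω := by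
    intro ω
    simp [centeredMul, Fintype.sum_prod_type, mul_sub, Finset.sum_sub_distrib, Matrix.trace,
      Finset.mul_sum, mul_comm, mul_left_comm]
  simp_rw [hsum]
  rw [integral_finsetSum_sq _ fun p _ q _ =>
    ((hZ p.1 p.2).const_mul _).integrable_mul ((hZ q.1 q.2).const_mul _)]
  simp_rw [mul_mul_mul_comm (B _ _), integral_const_mul,
    integral_centeredMul_mul_centeredMul hξ hx hy hmx hmy hxy hγx hγy hρ hκ]
  simp only [Fintype.sum_prod_type]
  rw [Matrix.trace_transpose_mul_self_eq_sum_sq]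
  simp [mul_add, Finset.sum_add_distrib, ite_and, sq, Finset.sum_mul, Matrix.trace,
    Matrix.mul_apply, mul_comm (γx * γy), mul_comm (ρ * ρ), mul_comm (κ - γx * γy - ρ * ρ)]

end BilinearForm

theorem bilinear_form_variance_bound {Ω : Type*} [MeasureSpace Ω]
    [IsProbabilityMeasure (ℙ : Measure Ω)] {n : ℕ} (hn : 0 < n)
    (x y : Fin n → Ω → ℝ)
    (hmeas : ∀ i, Measurable (x i)) (hmeas' : ∀ i, Measurable (y i))
    -- the pairs (x_i, y_i) are independent ...
    (hindep : iIndepFun (fun i ω => (x i ω, y i ω)) ℙ)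
    -- ... and identically distributed
    (hident : ∀ i, IdentDistrib (fun ω => (x i ω, y i ω))
        (fun ω => (x ⟨0, hn⟩ ω, y ⟨0, hn⟩ ω)) ℙ ℙ)
    -- mean zero
    (hmx : ∀ i, ∫ ω, x i ω = 0) (hmy : ∀ i, ∫ ω, y i ω = 0)
    -- finite fourth moments
    (h4x : ∀ i, MemLp (x i) 4 ℙ) (h4y : ∀ i, MemLp (y i) 4 ℙ)
    (γx γy ρ κ : ℝ)
    (hγx : γx = ∫ ω, (x ⟨0, hn⟩ ω) ^ 2) (hγy : γy = ∫ ω, (y ⟨0, hn⟩ ω) ^ 2)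
    (hρ : ρ = ∫ ω, x ⟨0, hn⟩ ω * y ⟨0, hn⟩ ω)
    (hκ : κ = ∫ ω, (x ⟨0, hn⟩ ω * y ⟨0, hn⟩ ω - ρ) ^ 2)
    (B : Matrix (Fin n) (Fin n) ℝ) (hB : B.IsSymm) :
    ∫ ω, ((∑ i, ∑ j, x i ω * B i j * y j ω) - ρ * B.trace) ^ 2
      ≤ 3 * max κ (γx * γy) * (B * B).trace := by
  set i₀ : Fin n := ⟨0, hn⟩
  have moment {u : ℝ × ℝ → ℝ} (hu : Measurable u) (i : Fin n) :
      ∫ ω, u (x i ω, y i ω) = ∫ ω, u (x i₀ ω, y i₀ ω) :=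
    ((hident i).comp hu).integral_eq
  have hvar := integral_bilinForm_sub_sq_eq hindep hmeas hmeas' hmx hmy h4x h4y
    (fun i => (moment (u := fun z => z.1 ^ 2) (by fun_prop) i).trans hγx.symm)
    (fun i => (moment (u := fun z => z.2 ^ 2) (by fun_prop) i).trans hγy.symm)
    (fun i => (moment (u := fun z => z.1 * z.2) (by fun_prop) i).trans hρ.symm)
    (fun i => (moment (u := fun z => (z.1 * z.2 - ρ) ^ 2) (by fun_prop) i).trans hκ.symm) B
  have hCS : ρ ^ 2 ≤ γx * γy := by
    rw [hρ, hγx, hγy]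
    exact sq_integral_mul_le_integral_sq_mul_integral_sq ((h4x i₀).mono_exponent (by norm_num))
      ((h4y i₀).mono_exponent (by norm_num))
  have hκ₀ : 0 ≤ κ := hκ ▸ integral_nonneg fun ω => sq_nonneg _
  have hD₀ : 0 ≤ ∑ i, B i i ^ 2 := Finset.sum_nonneg fun i _ => sq_nonneg _
  have hDT := B.sum_diag_sq_le_trace_transpose_mul_self
  rw [hB.eq] at hvar hDT
  rw [hvar]
  nlinarith [le_max_left κ (γx * γy), le_max_right κ (γx * γy)]
end

section
/- Eigenvector perturbation lemma: let A, B be symmetric m×m matrices, λ_r(A) a simple eigenvalue of A with spectral gap δ_r(A) = min_{j≠r} |λ_j(A) − λ_r(A)|, and suppose ‖B‖ < δ_r(A)/3. Then λ_r(A+B) is simple, and choosing unit eigenvectors p_r(A), p_r(A+B) with p_r(A)ᵀp_r(A+B) ≥ 0, one has p_r(A+B) − p_r(A) = −H_r(A) B p_r(A) + R_r with ‖R_r‖ ≤ 10 δ_r(A)⁻² ‖B‖², where H_r(A) = Σ_{s≠r} (λ_s(A) − λ_r(A))⁻¹ P_s(A) is the reduced resolvent. -/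
/-!
In the orthonormal eigenbasis `p_s` of `A`, the coordinates of a `μ`-eigenvector `q` of `A + B`
satisfy `(μ - λ_s) ⟨p_s, q⟩ = ⟨p_s, B q⟩`. Taking for `μ` the eigenvalue of `A + B` nearest to
`λ_r`, expanding `(A + B - λ_r) p_r = B p_r` in an eigenbasis of `A + B` gives `|μ - λ_r| ≤ β`,
so `μ` stays `δ - β > 2β` away from every other `λ_s`. Hence the part of a unit `μ`-eigenvector
orthogonal to `p_r` has squared length at most `(β / (δ - β))² < 1/4`: an eigenvector is
determined by its `p_r`-coordinate, so `μ` is simple. For the remainder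
`R = q - p_r + H_r(A) B p_r` one has `⟨p_r, R⟩ = ⟨p_r, q⟩ - 1` and, for `t ≠ r`,
`(λ_t - λ_r) ⟨p_t, R⟩ = (μ - λ_r) ⟨p_t, q⟩ - ⟨p_t, B (q - p_r)⟩`; since `q` is `O(β / δ)`-close
to `p_r`, every coordinate of `R` is of order `β² / δ²`.
-/

open Matrix

/-- Euclidean norm of a vector in `Fin m → ℝ`. -/
noncomputable def evNorm {m : ℕ} (v : Fin m → ℝ) : ℝ := Real.sqrt (v ⬝ᵥ v)

open Finset

theorem evNorm_nonneg {m : ℕ} (v : Fin m → ℝ) : 0 ≤ evNorm v := Real.sqrt_nonneg _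

theorem evNorm_sq {m : ℕ} (v : Fin m → ℝ) : evNorm v ^ 2 = v ⬝ᵥ v :=
  Real.sq_sqrt (Fintype.sum_nonneg fun i => mul_self_nonneg (v i))

theorem dotProduct_self_le_of_evNorm_le {m : ℕ} {u v : Fin m → ℝ} {β : ℝ}
    (h : evNorm u ≤ β * evNorm v) : u ⬝ᵥ u ≤ β ^ 2 * (v ⬝ᵥ v) := by
  simpa only [mul_pow, evNorm_sq] using pow_le_pow_left₀ (evNorm_nonneg u) h 2

section OrthonormalFamily

variable {m : ℕ} {P : Fin m → Fin m → ℝ}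

theorem sum_dotProduct_mul_dotProduct
    (horth : ∀ s t, P s ⬝ᵥ P t = if s = t then (1 : ℝ) else 0) (v w : Fin m → ℝ) :
    ∑ s, (P s ⬝ᵥ v) * (P s ⬝ᵥ w) = v ⬝ᵥ w := by
  have hrows : of P * (of P)ᵀ = 1 := by
    ext s t
    simpa [mul_apply, one_apply, dotProduct] using horth s t
  calc ∑ s, (P s ⬝ᵥ v) * (P s ⬝ᵥ w) = (of P *ᵥ v) ⬝ᵥ (of P *ᵥ w) := rfl
    _ = ((of P)ᵀ * of P) *ᵥ v ⬝ᵥ w := by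
      rw [dotProduct_mulVec, ← mulVec_transpose, mulVec_mulVec]
    _ = v ⬝ᵥ w := by rw [mul_eq_one_comm.mp hrows, one_mulVec]

theorem sum_sq_dotProduct
    (horth : ∀ s t, P s ⬝ᵥ P t = if s = t then (1 : ℝ) else 0) (v : Fin m → ℝ) :
    ∑ s, (P s ⬝ᵥ v) ^ 2 = v ⬝ᵥ v := by
  simpa only [sq] using sum_dotProduct_mul_dotProduct horth v v

theorem sq_add_sum_erase_sq_dotProduct
    (horth : ∀ s t, P s ⬝ᵥ P t = if s = t then (1 : ℝ) else 0) (r : Fin m) (v : Fin m → ℝ) :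
    (P r ⬝ᵥ v) ^ 2 + ∑ s ∈ univ.erase r, (P s ⬝ᵥ v) ^ 2 = v ⬝ᵥ v := by
  rw [add_sum_erase _ (fun s => (P s ⬝ᵥ v) ^ 2) (mem_univ r), sum_sq_dotProduct horth]

theorem sum_erase_sq_dotProduct_le
    (horth : ∀ s t, P s ⬝ᵥ P t = if s = t then (1 : ℝ) else 0) (r : Fin m) (v : Fin m → ℝ) :
    ∑ s ∈ univ.erase r, (P s ⬝ᵥ v) ^ 2 ≤ v ⬝ᵥ v := by
  rw [← sq_add_sum_erase_sq_dotProduct horth r v]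
  exact le_add_of_nonneg_left (sq_nonneg _)

end OrthonormalFamily

section SymmetricMatrix

variable {m : ℕ}

theorem dotProduct_mulVec_of_mulVec_eq_smul {M : Matrix (Fin m) (Fin m) ℝ} (hM : M.IsSymm)
    {u : Fin m → ℝ} {a : ℝ} (hu : M *ᵥ u = a • u) (v : Fin m → ℝ) :
    u ⬝ᵥ M *ᵥ v = a * (u ⬝ᵥ v) := by
  rw [dotProduct_mulVec, ← mulVec_transpose, hM.eq, hu, smul_dotProduct, smul_eq_mul]

theorem dotProduct_eigenvectorBasis {M : Matrix (Fin m) (Fin m) ℝ} (hM : M.IsHermitian)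
    (i j : Fin m) :
    ⇑(hM.eigenvectorBasis i) ⬝ᵥ ⇑(hM.eigenvectorBasis j) = if i = j then (1 : ℝ) else 0 := by
  rw [← orthonormal_iff_ite.mp hM.eigenvectorBasis.orthonormal i j,
    EuclideanSpace.inner_eq_star_dotProduct, dotProduct_comm]
  rfl

theorem exists_eigenvalue_sq_sub_le {M : Matrix (Fin m) (Fin m) ℝ} (hM : M.IsSymm)
    {x : Fin m → ℝ} (hx : x ⬝ᵥ x = 1) (c : ℝ) :
    ∃ μ q, M *ᵥ q = μ • q ∧ q ⬝ᵥ q = 1 ∧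
      (μ - c) ^ 2 ≤ (M *ᵥ x - c • x) ⬝ᵥ (M *ᵥ x - c • x) := by
  have hMh : M.IsHermitian := isHermitian_iff_isSymm.mpr hM
  set Q : Fin m → Fin m → ℝ := fun i => hMh.eigenvectorBasis i
  have hQ : ∀ i j, Q i ⬝ᵥ Q j = if i = j then 1 else 0 := dotProduct_eigenvectorBasis hMh
  have hQeig : ∀ i, M *ᵥ Q i = hMh.eigenvalues i • Q i := hMh.mulVec_eigenvectorBasis
  have : Nonempty (Fin m) := by
    rcases isEmpty_or_nonempty (Fin m) with h | h
    · simp [dotProduct] at hx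
    · exact h
  obtain ⟨i, -, hi⟩ := exists_min_image univ (fun i => (hMh.eigenvalues i - c) ^ 2) univ_nonempty
  refine ⟨hMh.eigenvalues i, Q i, hQeig i, by simpa using hQ i i, ?_⟩
  have hcoord : ∀ j, Q j ⬝ᵥ (M *ᵥ x - c • x) = (hMh.eigenvalues j - c) * (Q j ⬝ᵥ x) := fun j => by
    rw [dotProduct_sub, dotProduct_mulVec_of_mulVec_eq_smul hM (hQeig j), dotProduct_smul,
      smul_eq_mul, sub_mul]
  calc (hMh.eigenvalues i - c) ^ 2 = ∑ j, (hMh.eigenvalues i - c) ^ 2 * (Q j ⬝ᵥ x) ^ 2 := by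
        rw [← mul_sum, sum_sq_dotProduct hQ, hx, mul_one]
    _ ≤ ∑ j, (hMh.eigenvalues j - c) ^ 2 * (Q j ⬝ᵥ x) ^ 2 :=
        sum_le_sum fun j _ => mul_le_mul_of_nonneg_right (hi j (mem_univ j)) (sq_nonneg _)
    _ = (M *ᵥ x - c • x) ⬝ᵥ (M *ᵥ x - c • x) := by
        simp only [← sum_sq_dotProduct hQ, hcoord, mul_pow]

theorem exists_unit_eigenvector_near {M : Matrix (Fin m) (Fin m) ℝ} (hM : M.IsSymm)
    {x : Fin m → ℝ} (hx : x ⬝ᵥ x = 1) (c : ℝ) :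
    ∃ μ q, M *ᵥ q = μ • q ∧ q ⬝ᵥ q = 1 ∧ 0 ≤ x ⬝ᵥ q ∧ |μ - c| ≤ evNorm (M *ᵥ x - c • x) := by
  obtain ⟨μ, q, hq, hqq, hμ⟩ := exists_eigenvalue_sq_sub_le hM hx c
  rcases le_total 0 (x ⬝ᵥ q) with hxq | hxq
  · exact ⟨μ, q, hq, hqq, hxq, Real.abs_le_sqrt hμ⟩
  · refine ⟨μ, -q, ?_, by simpa using hqq, by simpa using hxq, Real.abs_le_sqrt hμ⟩
    rw [mulVec_neg, hq, smul_neg]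

end SymmetricMatrix

section Perturbation

variable {m : ℕ} {A B : Matrix (Fin m) (Fin m) ℝ} {lam : Fin m → ℝ} {P : Fin m → Fin m → ℝ}
  {r : Fin m} {μ β γ : ℝ} {q w : Fin m → ℝ}

theorem sub_mul_dotProduct_eq_dotProduct_mulVec (hA : A.IsSymm)
    (heig : ∀ s, A *ᵥ P s = lam s • P s) (hw : (A + B) *ᵥ w = μ • w) (s : Fin m) :
    (μ - lam s) * (P s ⬝ᵥ w) = P s ⬝ᵥ B *ᵥ w := by
  have h := congrArg (P s ⬝ᵥ ·) hw
  simp only [add_mulVec, dotProduct_add, dotProduct_mulVec_of_mulVec_eq_smul hA (heig s),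
    dotProduct_smul, smul_eq_mul] at h
  linarith

theorem sq_mul_sum_erase_sq_le (hA : A.IsSymm) (heig : ∀ s, A *ᵥ P s = lam s • P s)
    (horth : ∀ s t, P s ⬝ᵥ P t = if s = t then (1 : ℝ) else 0)
    (hB : ∀ v, B *ᵥ v ⬝ᵥ B *ᵥ v ≤ β ^ 2 * (v ⬝ᵥ v)) (hgap : ∀ s ≠ r, γ ≤ |μ - lam s|)
    (hγ : 0 ≤ γ) (hw : (A + B) *ᵥ w = μ • w) :
    γ ^ 2 * ∑ s ∈ univ.erase r, (P s ⬝ᵥ w) ^ 2 ≤ β ^ 2 * (w ⬝ᵥ w) := by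
  have hterm : ∀ s ∈ univ.erase r, γ ^ 2 * (P s ⬝ᵥ w) ^ 2 ≤ (P s ⬝ᵥ B *ᵥ w) ^ 2 := by
    intro s hs
    rw [← sub_mul_dotProduct_eq_dotProduct_mulVec hA heig hw, mul_pow, ← sq_abs (μ - lam s)]
    exact mul_le_mul_of_nonneg_right
      (pow_le_pow_left₀ hγ (hgap s (ne_of_mem_erase hs)) 2) (sq_nonneg _)
  calc γ ^ 2 * ∑ s ∈ univ.erase r, (P s ⬝ᵥ w) ^ 2
      ≤ ∑ s ∈ univ.erase r, (P s ⬝ᵥ B *ᵥ w) ^ 2 := by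
        rw [mul_sum]; exact sum_le_sum hterm
    _ ≤ B *ᵥ w ⬝ᵥ B *ᵥ w := sum_erase_sq_dotProduct_le horth r _
    _ ≤ β ^ 2 * (w ⬝ᵥ w) := hB w

theorem eq_zero_of_dotProduct_eq_zero (hA : A.IsSymm) (heig : ∀ s, A *ᵥ P s = lam s • P s)
    (horth : ∀ s t, P s ⬝ᵥ P t = if s = t then (1 : ℝ) else 0)
    (hB : ∀ v, B *ᵥ v ⬝ᵥ B *ᵥ v ≤ β ^ 2 * (v ⬝ᵥ v)) (hgap : ∀ s ≠ r, γ ≤ |μ - lam s|)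
    (hβ : 0 ≤ β) (hβγ : β < γ) (hw : (A + B) *ᵥ w = μ • w) (hwr : P r ⬝ᵥ w = 0) : w = 0 := by
  have h := sq_mul_sum_erase_sq_le hA heig horth hB hgap (hβ.trans hβγ.le) hw
  rw [← sq_add_sum_erase_sq_dotProduct horth r w, hwr] at h
  have hS : 0 ≤ ∑ s ∈ univ.erase r, (P s ⬝ᵥ w) ^ 2 := sum_nonneg fun _ _ => sq_nonneg _
  have hβγ2 : β ^ 2 < γ ^ 2 := pow_lt_pow_left₀ hβγ hβ two_ne_zero
  rw [← dotProduct_self_eq_zero, ← sq_add_sum_erase_sq_dotProduct horth r w, hwr]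
  nlinarith

theorem exists_eq_smul_of_mulVec_eq_smul (hA : A.IsSymm) (heig : ∀ s, A *ᵥ P s = lam s • P s)
    (horth : ∀ s t, P s ⬝ᵥ P t = if s = t then (1 : ℝ) else 0)
    (hB : ∀ v, B *ᵥ v ⬝ᵥ B *ᵥ v ≤ β ^ 2 * (v ⬝ᵥ v)) (hgap : ∀ s ≠ r, γ ≤ |μ - lam s|)
    (hβ : 0 ≤ β) (hβγ : β < γ) (hq : (A + B) *ᵥ q = μ • q) (hq0 : q ≠ 0)
    (hw : (A + B) *ᵥ w = μ • w) : ∃ c : ℝ, w = c • q := by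
  have hqr : P r ⬝ᵥ q ≠ 0 :=
    fun h => hq0 (eq_zero_of_dotProduct_eq_zero hA heig horth hB hgap hβ hβγ hq h)
  refine ⟨(P r ⬝ᵥ w) / (P r ⬝ᵥ q), sub_eq_zero.mp ?_⟩
  refine eq_zero_of_dotProduct_eq_zero hA heig horth hB hgap hβ hβγ ?_ ?_
  · rw [mulVec_sub, mulVec_smul, hw, hq, smul_sub, smul_comm]
  · rw [dotProduct_sub, dotProduct_smul, smul_eq_mul, div_mul_cancel₀ _ hqr, sub_self]

end Perturbation

noncomputable def reducedResolvent {m : ℕ} (lam : Fin m → ℝ) (P : Fin m → Fin m → ℝ) (r : Fin m) :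
    Matrix (Fin m) (Fin m) ℝ :=
  ∑ s ∈ univ.erase r, (lam s - lam r)⁻¹ • vecMulVec (P s) (P s)

section Remainder

variable {m : ℕ} {A B : Matrix (Fin m) (Fin m) ℝ} {lam : Fin m → ℝ} {P : Fin m → Fin m → ℝ}
  {r : Fin m} {μ β δ : ℝ} {q : Fin m → ℝ}

theorem dotProduct_reducedResolvent_mulVec
    (horth : ∀ s t, P s ⬝ᵥ P t = if s = t then (1 : ℝ) else 0) (t : Fin m) (v : Fin m → ℝ) :
    P t ⬝ᵥ reducedResolvent lam P r *ᵥ v = if t = r then 0 else (lam t - lam r)⁻¹ * (P t ⬝ᵥ v) := by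
  simp only [reducedResolvent, sum_mulVec, smul_mulVec, vecMulVec_mulVec, dotProduct_sum,
    dotProduct_smul, horth, smul_eq_mul, op_smul_eq_mul, ite_mul, one_mul, zero_mul, mul_ite,
    mul_zero, sum_ite_eq, mem_erase, mem_univ, and_true, ite_not]

theorem dotProduct_reducedResolvent_add_sub_self
    (horth : ∀ s t, P s ⬝ᵥ P t = if s = t then (1 : ℝ) else 0) (v : Fin m → ℝ) :
    P r ⬝ᵥ (reducedResolvent lam P r *ᵥ v + (q - P r)) = P r ⬝ᵥ q - 1 := by
  rw [dotProduct_add, dotProduct_reducedResolvent_mulVec horth, if_pos rfl, dotProduct_sub,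
    horth, if_pos rfl, zero_add]

theorem sub_mul_dotProduct_reducedResolvent_add_sub (hA : A.IsSymm)
    (heig : ∀ s, A *ᵥ P s = lam s • P s)
    (horth : ∀ s t, P s ⬝ᵥ P t = if s = t then (1 : ℝ) else 0)
    (hq : (A + B) *ᵥ q = μ • q) {t : Fin m} (htr : t ≠ r) (hlam : lam t ≠ lam r) :
    (lam t - lam r) * (P t ⬝ᵥ (reducedResolvent lam P r *ᵥ (B *ᵥ P r) + (q - P r)))
      = (μ - lam r) * (P t ⬝ᵥ q) - P t ⬝ᵥ B *ᵥ (q - P r) := by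
  have hq' := sub_mul_dotProduct_eq_dotProduct_mulVec hA heig hq t
  rw [dotProduct_add, dotProduct_reducedResolvent_mulVec horth, if_neg htr, dotProduct_sub,
    horth, if_neg htr, mulVec_sub, dotProduct_sub, ← hq']
  field_simp [sub_ne_zero.mpr hlam]
  ring

theorem sq_mul_sum_erase_sq_reducedResolvent_add_sub_le (hA : A.IsSymm)
    (heig : ∀ s, A *ᵥ P s = lam s • P s)
    (horth : ∀ s t, P s ⬝ᵥ P t = if s = t then (1 : ℝ) else 0)
    (hB : ∀ v, B *ᵥ v ⬝ᵥ B *ᵥ v ≤ β ^ 2 * (v ⬝ᵥ v)) (hδ : ∀ s ≠ r, δ ≤ |lam s - lam r|)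
    (hδ0 : 0 < δ) (hμ : |μ - lam r| ≤ β) (hq : (A + B) *ᵥ q = μ • q) :
    δ ^ 2 * ∑ t ∈ univ.erase r, (P t ⬝ᵥ (reducedResolvent lam P r *ᵥ (B *ᵥ P r) + (q - P r))) ^ 2
      ≤ 2 * β ^ 2 * (∑ t ∈ univ.erase r, (P t ⬝ᵥ q) ^ 2 + (q - P r) ⬝ᵥ (q - P r)) := by
  set R := reducedResolvent lam P r *ᵥ (B *ᵥ P r) + (q - P r)
  have hμ2 : (μ - lam r) ^ 2 ≤ β ^ 2 := sq_le_sq' (abs_le.mp hμ).1 (abs_le.mp hμ).2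
  have hterm : ∀ t ∈ univ.erase r,
      δ ^ 2 * (P t ⬝ᵥ R) ^ 2 ≤ 2 * β ^ 2 * (P t ⬝ᵥ q) ^ 2 + 2 * (P t ⬝ᵥ B *ᵥ (q - P r)) ^ 2 := by
    intro t ht
    have htr := ne_of_mem_erase ht
    have hδt : δ ^ 2 ≤ (lam t - lam r) ^ 2 := by
      rw [← sq_abs (lam t - lam r)]; exact pow_le_pow_left₀ hδ0.le (hδ t htr) 2
    have hlam : lam t ≠ lam r := fun h => by
      have := hδ t htr
      rw [h, sub_self, abs_zero] at this
      linarith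
    calc δ ^ 2 * (P t ⬝ᵥ R) ^ 2 ≤ ((lam t - lam r) * (P t ⬝ᵥ R)) ^ 2 := by
          rw [mul_pow]; exact mul_le_mul_of_nonneg_right hδt (sq_nonneg _)
      _ ≤ 2 * β ^ 2 * (P t ⬝ᵥ q) ^ 2 + 2 * (P t ⬝ᵥ B *ᵥ (q - P r)) ^ 2 := by
          rw [sub_mul_dotProduct_reducedResolvent_add_sub hA heig horth hq htr hlam]
          nlinarith [sq_nonneg ((μ - lam r) * (P t ⬝ᵥ q) + P t ⬝ᵥ B *ᵥ (q - P r)),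
            mul_le_mul_of_nonneg_right hμ2 (sq_nonneg (P t ⬝ᵥ q))]
  calc δ ^ 2 * ∑ t ∈ univ.erase r, (P t ⬝ᵥ R) ^ 2
      ≤ ∑ t ∈ univ.erase r, (2 * β ^ 2 * (P t ⬝ᵥ q) ^ 2 + 2 * (P t ⬝ᵥ B *ᵥ (q - P r)) ^ 2) := by
        rw [mul_sum]; exact sum_le_sum hterm
    _ ≤ 2 * β ^ 2 * ∑ t ∈ univ.erase r, (P t ⬝ᵥ q) ^ 2
          + 2 * (B *ᵥ (q - P r) ⬝ᵥ B *ᵥ (q - P r)) := by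
        rw [sum_add_distrib, ← mul_sum, ← mul_sum]
        gcongr
        exact sum_erase_sq_dotProduct_le horth r _
    _ ≤ _ := by nlinarith [hB (q - P r)]

end Remainder

theorem sq_sub_one_add_le {δ β c S Y : ℝ} (hβ0 : 0 ≤ β) (hβδ : β < δ / 3) (hc : 0 ≤ c)
    (hS0 : 0 ≤ S) (hcS : c ^ 2 + S = 1) (hS : (δ - β) ^ 2 * S ≤ β ^ 2)
    (hY : δ ^ 2 * Y ≤ 2 * β ^ 2 * (S + 2 * (1 - c))) :
    (c - 1) ^ 2 + Y ≤ (10 * δ⁻¹ ^ 2 * β ^ 2) ^ 2 := by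
  have hδ0 : 0 < δ := by linarith
  have hc1 : 0 ≤ 1 - c := by nlinarith
  have hcS' : 1 - c ≤ S := by nlinarith
  have hSδ : δ ^ 2 * S ≤ 9 / 4 * β ^ 2 := by
    have h := pow_le_pow_left₀ (by positivity) (by linarith : 2 / 3 * δ ≤ δ - β) 2
    nlinarith [mul_le_mul_of_nonneg_right h hS0]
  have hSδ2 := pow_le_pow_left₀ (by positivity) hSδ 2
  have hYδ : δ ^ 4 * Y ≤ 27 / 2 * β ^ 4 := by
    nlinarith [mul_le_mul_of_nonneg_left hY (sq_nonneg δ),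
      mul_le_mul_of_nonneg_left hSδ (sq_nonneg β), mul_nonneg (sq_nonneg δ) (sq_nonneg β)]
  have hcδ : δ ^ 4 * (c - 1) ^ 2 ≤ δ ^ 4 * S ^ 2 :=
    mul_le_mul_of_nonneg_left (by nlinarith) (by positivity)
  rw [show (10 * δ⁻¹ ^ 2 * β ^ 2) ^ 2 = 100 * β ^ 4 / δ ^ 4 by field_simp; ring,
    le_div_iff₀ (by positivity)]
  nlinarith

theorem evNorm_reducedResolvent_add_sub_le {m : ℕ} {A B : Matrix (Fin m) (Fin m) ℝ}
    {lam : Fin m → ℝ} {P : Fin m → Fin m → ℝ} {r : Fin m} {μ β δ : ℝ} {q : Fin m → ℝ}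
    (hA : A.IsSymm) (heig : ∀ s, A *ᵥ P s = lam s • P s)
    (horth : ∀ s t, P s ⬝ᵥ P t = if s = t then (1 : ℝ) else 0)
    (hB : ∀ v, B *ᵥ v ⬝ᵥ B *ᵥ v ≤ β ^ 2 * (v ⬝ᵥ v)) (hδ : ∀ s ≠ r, δ ≤ |lam s - lam r|)
    (hβ0 : 0 ≤ β) (hβδ : β < δ / 3) (hμ : |μ - lam r| ≤ β) (hq : (A + B) *ᵥ q = μ • q)
    (hqq : q ⬝ᵥ q = 1) (hrq : 0 ≤ P r ⬝ᵥ q)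
    (hS : (δ - β) ^ 2 * ∑ s ∈ univ.erase r, (P s ⬝ᵥ q) ^ 2 ≤ β ^ 2) :
    evNorm (reducedResolvent lam P r *ᵥ (B *ᵥ P r) + (q - P r)) ≤ 10 * δ⁻¹ ^ 2 * β ^ 2 := by
  have hee : (q - P r) ⬝ᵥ (q - P r) = 2 * (1 - P r ⬝ᵥ q) := by
    simp only [dotProduct_sub, sub_dotProduct, hqq, horth, if_pos, dotProduct_comm q]
    ring
  have hY := sq_mul_sum_erase_sq_reducedResolvent_add_sub_le hA heig horth hB hδ
    (by linarith) hμ hq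
  rw [hee] at hY
  rw [evNorm, Real.sqrt_le_left (by positivity), ← sq_add_sum_erase_sq_dotProduct horth r,
    dotProduct_reducedResolvent_add_sub_self horth]
  refine sq_sub_one_add_le hβ0 hβδ hrq (sum_nonneg fun _ _ => sq_nonneg _) ?_ hS hY
  rw [sq_add_sum_erase_sq_dotProduct horth r, hqq]

theorem eigenvector_perturbation_general {m : ℕ} (A B : Matrix (Fin m) (Fin m) ℝ)
    (hA : A.IsSymm) (hB : B.IsSymm)
    -- spectral decomposition of A: orthonormal eigenbasis P with eigenvalues lam
    (lam : Fin m → ℝ) (P : Fin m → (Fin m → ℝ))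
    (heig : ∀ s, A.mulVec (P s) = lam s • P s)
    (horth : ∀ s t, P s ⬝ᵥ P t = if s = t then (1 : ℝ) else 0)
    (r : Fin m)
    -- δ is the spectral gap (any lower bound on the gap)
    (δ : ℝ) (hδ : ∀ j, j ≠ r → δ ≤ |lam j - lam r|)
    -- β is the operator norm bound for B, with ‖B‖ ≤ β < δ/3
    (β : ℝ)
    (hβop : ∀ v : Fin m → ℝ, evNorm (B.mulVec v) ≤ β * evNorm v)
    (hβδ : β < δ / 3) :
    ∃ (μ : ℝ) (q R : Fin m → ℝ),
      -- μ is the eigenvalue of A + B corresponding to λ_r(A)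
      |μ - lam r| ≤ β ∧
      (A + B).mulVec q = μ • q ∧
      -- μ is simple, with unit eigenvector q
      q ⬝ᵥ q = 1 ∧
      (∀ w, (A + B).mulVec w = μ • w → ∃ c : ℝ, w = c • q) ∧
      -- sign convention
      0 ≤ P r ⬝ᵥ q ∧
      -- first-order expansion with quadratic error bound
      q - P r
        = -((∑ s ∈ Finset.univ.erase r,
              (lam s - lam r)⁻¹ • Matrix.vecMulVec (P s) (P s)).mulVec
            (B.mulVec (P r))) + R ∧
      evNorm R ≤ 10 * δ⁻¹ ^ 2 * β ^ 2 := by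
  have hPr : P r ⬝ᵥ P r = 1 := by simpa using horth r r
  have hevPr : evNorm (P r) = 1 := by rw [evNorm, hPr, Real.sqrt_one]
  have hβ0 : 0 ≤ β := by simpa [hevPr] using (evNorm_nonneg _).trans (hβop (P r))
  have hBsq : ∀ v, B *ᵥ v ⬝ᵥ B *ᵥ v ≤ β ^ 2 * (v ⬝ᵥ v) :=
    fun v => dotProduct_self_le_of_evNorm_le (hβop v)
  obtain ⟨μ, q, hq, hqq, hrq, hμ⟩ := exists_unit_eigenvector_near (hA.add hB) hPr (lam r)
  have hμr : |μ - lam r| ≤ β := by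
    rw [add_mulVec, heig, add_sub_cancel_left] at hμ
    simpa [hevPr] using hμ.trans (hβop (P r))
  have hgap : ∀ s ≠ r, δ - β ≤ |μ - lam s| := fun s hs => by
    linarith [hδ s hs, abs_sub_le (lam s) μ (lam r), abs_sub_comm (lam s) μ]
  have hS := sq_mul_sum_erase_sq_le hA heig horth hBsq hgap (by linarith) hq
  rw [hqq, mul_one] at hS
  have hq0 : q ≠ 0 := fun h => by simp [h] at hqq
  refine ⟨μ, q, reducedResolvent lam P r *ᵥ (B *ᵥ P r) + (q - P r), hμr, hq, hqq,
    fun _ => exists_eq_smul_of_mulVec_eq_smul hA heig horth hBsq hgap hβ0 (by linarith) hq hq0,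
    hrq, (neg_add_cancel_left _ _).symm, ?_⟩
  exact evNorm_reducedResolvent_add_sub_le hA heig horth hBsq hδ hβ0 hβδ hμr hq hqq hrq hS

theorem eigenvector_perturbation {m : ℕ} (A B : Matrix (Fin m) (Fin m) ℝ)
    (hA : A.IsSymm) (hB : B.IsSymm)
    -- spectral decomposition of A: orthonormal eigenbasis P with eigenvalues lam
    (lam : Fin m → ℝ) (P : Fin m → (Fin m → ℝ))
    (heig : ∀ s, A.mulVec (P s) = lam s • P s)
    (horth : ∀ s t, P s ⬝ᵥ P t = if s = t then (1 : ℝ) else 0)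
    (r : Fin m)
    -- λ_r(A) is a simple eigenvalue
    (hsimple : ∀ j, j ≠ r → lam j ≠ lam r)
    -- δ is the spectral gap (any lower bound on the gap)
    (δ : ℝ) (hδpos : 0 < δ) (hδ : ∀ j, j ≠ r → δ ≤ |lam j - lam r|)
    -- β is the operator norm bound for B, with ‖B‖ ≤ β < δ/3
    (β : ℝ) (hβ0 : 0 ≤ β)
    (hβop : ∀ v : Fin m → ℝ, evNorm (B.mulVec v) ≤ β * evNorm v)
    (hβδ : β < δ / 3) :
    ∃ (μ : ℝ) (q R : Fin m → ℝ),
      -- μ is the eigenvalue of A + B corresponding to λ_r(A)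
      |μ - lam r| ≤ β ∧
      (A + B).mulVec q = μ • q ∧
      -- μ is simple, with unit eigenvector q
      q ⬝ᵥ q = 1 ∧
      (∀ w, (A + B).mulVec w = μ • w → ∃ c : ℝ, w = c • q) ∧
      -- sign convention
      0 ≤ P r ⬝ᵥ q ∧
      -- first-order expansion with quadratic error bound
      q - P r
        = -((∑ s ∈ Finset.univ.erase r,
              (lam s - lam r)⁻¹ • Matrix.vecMulVec (P s) (P s)).mulVec
            (B.mulVec (P r))) + R ∧
      evNorm R ≤ 10 * δ⁻¹ ^ 2 * β ^ 2 :=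
  eigenvector_perturbation_general A B hA hB lam P heig horth r δ hδ β hβop hβδ
end
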